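/- arXiv:1210.4440 — 2 statements merged into one kernel-verified Lean document; each statement's English description precedes it below -/
import Mathlib

section
/- Let d ≥ 2 and let (λ_n) be a nondecreasing sequence of reals with λ_1 > 1, λ_n → ∞, λ_n/n decreasing to 0, and ∑ λ_n (log n)^{d-2} / n² < ∞. Then there exists a sequence (A_n) of positive reals with A_n increasing to ∞, λ_n A_n / n decreasing, and ∑ λ_n (log n)^{d-2} A_n^d / n² < ∞. -/
/-!
If `r n = ∑_{k ≥ n} b k` are the tails of a convergent series of positive terms, then
`b n / √(r n) ≤ 2 (√(r n) - √(r (n + 1)))`, so `∑ b n / √(r n)` still converges although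
`1 / √(r n) → ∞`. The `d`-th root `B` of this factor thus satisfies `∑ a n B n ^ d < ∞`.
To make `λ n A n / n` decrease as well, take for `A` the largest sequence below `B` with this
property, `A n = (n / λ n) min_{k ≤ n} (B k λ k / k)`. It still tends to infinity: for `k ≥ K`
the terms of the minimum are at least `B K λ n / n`, and since `λ n / n → 0` the finitely many
terms with `k < K` eventually exceed any fixed multiple of `λ n / n`.
-/

open Real Filter

section TailSums

variable {b : ℕ → ℝ}

lemma sub_div_sqrt_le_two_mul_sqrt_sub_sqrt {r s : ℝ} (hr : 0 < r) (hs : 0 ≤ s) :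
    (r - s) / √r ≤ 2 * (√r - √s) := by
  have hu : 0 < √r := sqrt_pos.2 hr
  rw [div_le_iff₀ hu]
  nlinarith [sq_sqrt hr.le, sq_sqrt hs, sq_nonneg (√r - √s)]

lemma tsum_nat_add_eq_add_tsum_nat_add (hb : Summable b) (n : ℕ) :
    ∑' k, b (k + n) = b n + ∑' k, b (k + (n + 1)) := by
  rw [((summable_nat_add_iff n).2 hb).tsum_eq_zero_add]
  simp only [zero_add, add_right_comm _ 1 n, add_assoc]

lemma tsum_nat_add_pos (hpos : ∀ n, 0 < b n) (hb : Summable b) (n : ℕ) :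
    0 < ∑' k, b (k + n) := by
  rw [tsum_nat_add_eq_add_tsum_nat_add hb n]
  exact add_pos_of_pos_of_nonneg (hpos n) (tsum_nonneg fun k => (hpos _).le)

lemma antitone_tsum_nat_add (hnonneg : ∀ n, 0 ≤ b n) (hb : Summable b) :
    Antitone fun n => ∑' k, b (k + n) :=
  antitone_nat_of_succ_le fun n => by
    rw [tsum_nat_add_eq_add_tsum_nat_add hb n]
    exact le_add_of_nonneg_left (hnonneg n)

lemma summable_div_sqrt_tsum_nat_add (hpos : ∀ n, 0 < b n) (hb : Summable b) :
    Summable fun n => b n / √(∑' k, b (k + n)) := by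
  set r : ℕ → ℝ := fun n => ∑' k, b (k + n)
  have hr_succ (n : ℕ) : r n - r (n + 1) = b n := by
    simp only [r, tsum_nat_add_eq_add_tsum_nat_add hb n]; ring
  have hr_nonneg (n : ℕ) : 0 ≤ r n := tsum_nonneg fun k => (hpos _).le
  refine summable_of_sum_range_le (c := 2 * √(r 0))
    (fun n => div_nonneg (hpos n).le (sqrt_nonneg _)) fun N => ?_
  calc ∑ n ∈ Finset.range N, b n / √(r n)
      ≤ ∑ n ∈ Finset.range N, 2 * (√(r n) - √(r (n + 1))) := by
        refine Finset.sum_le_sum fun n _ => ?_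
        rw [← hr_succ n]
        exact sub_div_sqrt_le_two_mul_sqrt_sub_sqrt (tsum_nat_add_pos hpos hb n) (hr_nonneg _)
    _ = 2 * (√(r 0) - √(r N)) := by rw [← Finset.mul_sum, Finset.sum_range_sub']
    _ ≤ 2 * √(r 0) := by linarith [sqrt_nonneg (r N)]

end TailSums

lemma Summable.exists_monotone_tendsto_atTop_summable_mul {a : ℕ → ℝ} (ha : ∀ n, 0 ≤ a n)
    (has : Summable a) :
    ∃ g : ℕ → ℝ, (∀ n, 0 < g n) ∧ Monotone g ∧ Tendsto g atTop atTop ∧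
      Summable fun n => a n * g n := by
  -- the perturbation makes all tails positive
  set b : ℕ → ℝ := fun n => a n + (1 / 2) ^ n
  have hpos (n : ℕ) : 0 < b n := add_pos_of_nonneg_of_pos (ha n) (by positivity)
  have hb : Summable b := has.add summable_geometric_two
  set r : ℕ → ℝ := fun n => ∑' k, b (k + n)
  have hr_pos : ∀ n, 0 < r n := tsum_nat_add_pos hpos hb
  have hr_anti : Antitone r := antitone_tsum_nat_add (fun n => (hpos n).le) hb
  have hr_lim : Tendsto (fun n => √(r n)) atTop (nhdsWithin 0 (Set.Ioi 0)) :=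
    tendsto_nhdsWithin_of_tendsto_nhds_of_eventually_within _
      (by rw [← sqrt_zero]; exact (continuous_sqrt.tendsto 0).comp (tendsto_sum_nat_add b))
      (Eventually.of_forall fun n => sqrt_pos.2 (hr_pos n))
  refine ⟨fun n => (√(r n))⁻¹, fun n => inv_pos.2 (sqrt_pos.2 (hr_pos n)),
    fun m n hmn => inv_anti₀ (sqrt_pos.2 (hr_pos n)) (sqrt_le_sqrt (hr_anti hmn)),
    tendsto_inv_nhdsGT_zero.comp hr_lim, ?_⟩
  refine (summable_div_sqrt_tsum_nat_add hpos hb).of_nonneg_of_le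
    (fun n => mul_nonneg (ha n) (inv_nonneg.2 (sqrt_nonneg _))) fun n => ?_
  rw [div_eq_mul_inv]
  exact mul_le_mul_of_nonneg_right (le_add_of_nonneg_right (by positivity))
    (inv_nonneg.2 (sqrt_nonneg _))

lemma Summable.exists_monotone_tendsto_atTop_summable_mul_pow {a : ℕ → ℝ} (ha : ∀ n, 0 ≤ a n)
    (has : Summable a) {d : ℕ} (hd : d ≠ 0) :
    ∃ B : ℕ → ℝ, (∀ n, 0 < B n) ∧ Monotone B ∧ Tendsto B atTop atTop ∧
      Summable fun n => a n * B n ^ d := by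
  obtain ⟨g, hg_pos, hg_mono, hg_lim, hg_sum⟩ := has.exists_monotone_tendsto_atTop_summable_mul ha
  have hd' : (0 : ℝ) < (d : ℝ)⁻¹ := by positivity
  refine ⟨fun n => g n ^ (d : ℝ)⁻¹, fun n => rpow_pos_of_pos (hg_pos n) _,
    fun m n hmn => rpow_le_rpow (hg_pos m).le (hg_mono hmn) hd'.le,
    (tendsto_rpow_atTop hd').comp hg_lim, ?_⟩
  simpa only [rpow_inv_natCast_pow (hg_pos _).le hd] using hg_sum

section AntitoneMulMinorant

/-- The largest sequence `A ≤ B` for which `n ↦ w n * A n` is antitone (when `w > 0`). -/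
noncomputable def antitoneMulMinorant (B w : ℕ → ℝ) (n : ℕ) : ℝ :=
  (Finset.range (n + 1)).inf' Finset.nonempty_range_add_one (fun k => B k * w k) / w n

variable {B w : ℕ → ℝ}

lemma mul_antitoneMulMinorant {n : ℕ} (hw : w n ≠ 0) :
    w n * antitoneMulMinorant B w n =
      (Finset.range (n + 1)).inf' Finset.nonempty_range_add_one (fun k => B k * w k) :=
  mul_div_cancel₀ _ hw

lemma antitoneMulMinorant_pos (hB : ∀ n, 0 < B n) (hw : ∀ n, 0 < w n) (n : ℕ) :
    0 < antitoneMulMinorant B w n :=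
  div_pos ((Finset.lt_inf'_iff _).2 fun k _ => mul_pos (hB k) (hw k)) (hw n)

lemma antitoneMulMinorant_le (hw : ∀ n, 0 < w n) (n : ℕ) : antitoneMulMinorant B w n ≤ B n :=
  (div_le_iff₀ (hw n)).2 (Finset.inf'_le _ (Finset.self_mem_range_succ n))

lemma antitone_mul_antitoneMulMinorant (hw : ∀ n, 0 < w n) :
    Antitone fun n => w n * antitoneMulMinorant B w n := by
  intro m n hmn
  simp only [mul_antitoneMulMinorant (hw _).ne']
  exact Finset.inf'_mono _ (Finset.range_subset_range.2 (by omega)) _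

lemma monotone_antitoneMulMinorant (hB : ∀ n, 0 < B n) (hB_mono : Monotone B)
    (hw : ∀ n, 0 < w n) (hw_anti : Antitone w) :
    Monotone (antitoneMulMinorant B w) := by
  refine monotone_nat_of_le_succ fun n => (le_div_iff₀ (hw _)).2 ?_
  refine Finset.le_inf' _ _ fun k hk => ?_
  rcases Nat.lt_succ_iff_lt_or_eq.1 (Finset.mem_range.1 hk) with hkn | rfl
  · calc antitoneMulMinorant B w n * w (n + 1) ≤ w n * antitoneMulMinorant B w n := by
          rw [mul_comm]; exact mul_le_mul_of_nonneg_right (hw_anti n.le_succ)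
            (antitoneMulMinorant_pos hB hw n).le
      _ ≤ B k * w k := by
          rw [mul_antitoneMulMinorant (hw n).ne']
          exact Finset.inf'_le _ (Finset.mem_range.2 hkn)
  · exact mul_le_mul_of_nonneg_right ((antitoneMulMinorant_le hw n).trans (hB_mono n.le_succ))
      (hw _).le

lemma tendsto_antitoneMulMinorant_atTop (hB : ∀ n, 0 < B n) (hB_lim : Tendsto B atTop atTop)
    (hw : ∀ n, 0 < w n) (hw_anti : Antitone w) (hw_lim : Tendsto w atTop (nhds 0)) :
    Tendsto (antitoneMulMinorant B w) atTop atTop := by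
  refine tendsto_atTop.2 fun C => ?_
  obtain ⟨K, hK⟩ := tendsto_atTop_atTop.1 hB_lim C
  have hμ : 0 < w K * antitoneMulMinorant B w K := mul_pos (hw K) (antitoneMulMinorant_pos hB hw K)
  have hCw : ∀ᶠ n in atTop, C * w n < w K * antitoneMulMinorant B w K := by
    simpa using (hw_lim.const_mul C).eventually_lt_const (by simpa using hμ)
  filter_upwards [hCw, eventually_ge_atTop K] with n hn hKn
  refine (le_div_iff₀ (hw n)).2 (Finset.le_inf' _ _ fun k hk => ?_)
  rcases le_or_gt K k with hKk | hkK
  · exact mul_le_mul (hK k hKk) (hw_anti (Finset.mem_range_succ_iff.1 hk)) (hw n).le (hB k).le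
  · rw [mul_antitoneMulMinorant (hw K).ne'] at hn
    exact hn.le.trans (Finset.inf'_le _ (Finset.mem_range_succ_iff.2 hkK.le))

end AntitoneMulMinorant

theorem stmt0_general (d : ℕ) (hd : 2 ≤ d) (l : ℕ → ℝ)
    (hl1 : 1 < l 1) (hmono : Monotone l)
    (hdec : ∀ n : ℕ, 1 ≤ n → l (n + 1) / (n + 1) ≤ l n / n)
    (hto0 : Tendsto (fun n : ℕ => l n / n) atTop (nhds 0))
    (hsum : Summable (fun n : ℕ => l (n + 1) * (Real.log (n + 1)) ^ (d - 2) / ((n : ℝ) + 1) ^ 2)) :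
    ∃ A : ℕ → ℝ, (∀ n, 0 < A n) ∧ Monotone A ∧ Tendsto A atTop atTop ∧
      (∀ n : ℕ, 1 ≤ n → l (n + 1) * A (n + 1) / (n + 1) ≤ l n * A n / n) ∧
      Summable (fun n : ℕ =>
        l (n + 1) * (Real.log (n + 1)) ^ (d - 2) * A (n + 1) ^ d / ((n : ℝ) + 1) ^ 2) := by
  have hl_pos (n : ℕ) : 0 < l (n + 1) := by linarith [hmono (Nat.le_add_left 1 n)]
  have ha (n : ℕ) : 0 ≤ l (n + 1) * (Real.log (n + 1)) ^ (d - 2) / ((n : ℝ) + 1) ^ 2 := by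
    have hlog : 0 ≤ Real.log (n + 1) := Real.log_nonneg (by linarith [n.cast_nonneg (α := ℝ)])
    exact div_nonneg (mul_nonneg (hl_pos n).le (pow_nonneg hlog _)) (by positivity)
  obtain ⟨B, hB_pos, hB_mono, hB_lim, hB_sum⟩ :=
    hsum.exists_monotone_tendsto_atTop_summable_mul_pow ha (by omega : d ≠ 0)
  set w : ℕ → ℝ := fun n => l (n + 1) / ((n : ℝ) + 1)
  have hw (n : ℕ) : 0 < w n := div_pos (hl_pos n) n.cast_add_one_pos
  have hw_anti : Antitone w := antitone_nat_of_succ_le fun n => by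
    simpa [w, add_assoc, one_add_one_eq_two] using hdec (n + 1) (by omega)
  have hw_lim : Tendsto w atTop (nhds 0) := by
    simpa [w, Function.comp_def] using hto0.comp (tendsto_add_atTop_nat 1)
  set A := antitoneMulMinorant B w
  refine ⟨fun n => A (n - 1), fun n => antitoneMulMinorant_pos hB_pos hw _,
    (monotone_antitoneMulMinorant hB_pos hB_mono hw hw_anti).comp
      fun _ _ h => Nat.sub_le_sub_right h 1,
    (tendsto_antitoneMulMinorant_atTop hB_pos hB_lim hw hw_anti hw_lim).comp
      (tendsto_sub_atTop_nat 1), fun n hn => ?_, ?_⟩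
  · obtain ⟨m, rfl⟩ := Nat.exists_eq_add_of_le' hn
    simpa [w, mul_div_right_comm] using antitone_mul_antitoneMulMinorant (B := B) hw m.le_succ
  · have hA_nonneg (n : ℕ) : 0 ≤ A n := (antitoneMulMinorant_pos hB_pos hw n).le
    refine hB_sum.of_nonneg_of_le (fun n => ?_) fun n => ?_ <;>
      simp only [Nat.add_sub_cancel, mul_div_right_comm _ (A n ^ d)]
    · exact mul_nonneg (ha n) (pow_nonneg (hA_nonneg n) d)
    · exact mul_le_mul_of_nonneg_left
        (pow_le_pow_left₀ (hA_nonneg n) (antitoneMulMinorant_le hw n) d) (ha n)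

theorem stmt0 (d : ℕ) (hd : 2 ≤ d) (l : ℕ → ℝ)
    (hl1 : 1 < l 1) (hmono : Monotone l)
    (hlim : Tendsto l atTop atTop)
    (hdec : ∀ n : ℕ, 1 ≤ n → l (n + 1) / (n + 1) ≤ l n / n)
    (hto0 : Tendsto (fun n : ℕ => l n / n) atTop (nhds 0))
    (hsum : Summable (fun n : ℕ => l (n + 1) * (Real.log (n + 1)) ^ (d - 2) / ((n : ℝ) + 1) ^ 2)) :
    ∃ A : ℕ → ℝ, (∀ n, 0 < A n) ∧ Monotone A ∧ Tendsto A atTop atTop ∧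
      (∀ n : ℕ, 1 ≤ n → l (n + 1) * A (n + 1) / (n + 1) ≤ l n * A n / n) ∧
      Summable (fun n : ℕ =>
        l (n + 1) * (Real.log (n + 1)) ^ (d - 2) * A (n + 1) ^ d / ((n : ℝ) + 1) ^ 2) :=
  stmt0_general d hd l hl1 hmono hdec hto0 hsum
end

section
/- Let d ≥ 2 and let (a_{i_1,...,i_d}) be nonnegative reals indexed by positive integers. Suppose for each k ∈ {1,...,d} there are nonnegative reals v_k(2^r) such that for all dyadic blocks [2^{r_1}, 2^{r_1+1}) × ⋯ × [2^{r_d}, 2^{r_d+1}), the block sum ∑ a_{i_1,...,i_d} over the block is at most C(d) · ∏_{k=1}^d 2^{r_k(1 - 1/d)} · v_k(2^{r_k})^{1/d}. If B_n = B_{2^N} for 2^N ≤ n < 2^{N+1} with B_{2^j} increasing and ∑_j B_{2^j} v_k(2^j)^{1/d} / 2^{j/d} < ∞ for each k, then ∑_{i_1,...,i_d} a_{i_1,...,i_d} · (B_{i_1}/i_1) ⋯ (B_{i_d}/i_d) < ∞. -/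
open Real Filter

/-! On the dyadic block `∏ₖ [2^{rₖ}, 2^{rₖ+1})` each weight `B_{iₖ}/iₖ` is at most `B_{2^{rₖ}}/2^{rₖ}`,
so the block hypothesis bounds the weighted block sum by `C ∏ₖ gₖ(rₖ)`, where
`gₖ(j) = B_{2^j} vₖ(2^j)^{1/d} / 2^{j/d}` is the `k`-th convergent series of the hypothesis: the
exponents `rₖ(1 - 1/d)` and `-rₖ` combine to `-rₖ/d`. A product of `d` convergent nonnegative
series is a convergent series over `ℕ^d`, and the dyadic blocks partition the points with positive
coordinates, so every partial sum of the weighted series is at most `C ∏ₖ ∑ⱼ gₖ(j)`. -/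

open Finset

section Dyadic

variable {ι : Type*} [Fintype ι] [DecidableEq ι]

def dyadicBlock (r : ι → ℕ) : Finset (ι → ℕ) :=
  Fintype.piFinset fun k => Ico (2 ^ r k) (2 ^ (r k + 1))

theorem mem_dyadicBlock {r x : ι → ℕ} :
    x ∈ dyadicBlock r ↔ ∀ k, 2 ^ r k ≤ x k ∧ x k < 2 ^ (r k + 1) := by
  simp only [dyadicBlock, Fintype.mem_piFinset, mem_Ico]

theorem mem_dyadicBlock_log {x : ι → ℕ} (hx : ∀ k, 1 ≤ x k) :
    x ∈ dyadicBlock fun k => Nat.log 2 (x k) :=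
  mem_dyadicBlock.2 fun k =>
    ⟨Nat.pow_log_le_self 2 (Nat.one_le_iff_ne_zero.1 (hx k)), Nat.lt_pow_succ_log_self one_lt_two _⟩

theorem summable_prod_apply_of_nonneg {κ : Type*} {g : ι → κ → ℝ} (hg0 : ∀ k j, 0 ≤ g k j)
    (hg : ∀ k, Summable (g k)) : Summable fun r : ι → κ => ∏ k, g k (r k) := by
  classical
  refine summable_of_sum_le (c := ∏ k, ∑' j, g k j)
    (fun r => prod_nonneg fun k _ => hg0 k (r k)) fun s => ?_
  calc ∑ r ∈ s, ∏ k, g k (r k)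
      ≤ ∑ r ∈ Fintype.piFinset (fun k => s.image (· k)), ∏ k, g k (r k) :=
        sum_le_sum_of_subset_of_nonneg
          (fun r hr => Fintype.mem_piFinset.2 fun k => mem_image_of_mem (· k) hr)
          (fun r _ _ => prod_nonneg fun k _ => hg0 k (r k))
    _ = ∏ k, ∑ j ∈ s.image (· k), g k j := (prod_univ_sum _ _).symm
    _ ≤ ∏ k, ∑' j, g k j :=
        prod_le_prod (fun k _ => sum_nonneg fun j _ => hg0 k j)
          (fun k _ => (hg k).sum_le_tsum _ fun j _ => hg0 k j)

theorem summable_of_sum_dyadicBlock_le {f G : (ι → ℕ) → ℝ}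
    (hf : ∀ r, ∀ x ∈ dyadicBlock r, 0 ≤ f x) (hG : Summable G)
    (hblock : ∀ r, ∑ x ∈ dyadicBlock r, f x ≤ G r) :
    Summable fun i : {i : ι → ℕ // ∀ k, 1 ≤ i k} => f i := by
  have hG0 : ∀ r, 0 ≤ G r := fun r => (sum_nonneg (hf r)).trans (hblock r)
  refine summable_of_sum_le (c := ∑' r, G r) (fun i => hf _ i.1 (mem_dyadicBlock_log i.2))
    fun u => ?_
  set t := u.map (Function.Embedding.subtype _)
  set logs : (ι → ℕ) → ι → ℕ := fun x k => Nat.log 2 (x k)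
  calc ∑ i ∈ u, f i = ∑ x ∈ t, f x := (sum_map u (Function.Embedding.subtype _) f).symm
    _ = ∑ r ∈ t.image logs, ∑ x ∈ t with logs x = r, f x :=
        (sum_fiberwise_of_maps_to (fun x hx => mem_image_of_mem logs hx) _).symm
    _ ≤ ∑ r ∈ t.image logs, ∑ x ∈ dyadicBlock r, f x := by
        refine sum_le_sum fun r _ => sum_le_sum_of_subset_of_nonneg ?_ fun x hx _ =>
          hf r x hx
        intro x hx
        obtain ⟨hxt, rfl⟩ := mem_filter.1 hx
        obtain ⟨i, -, rfl⟩ := mem_map.1 hxt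
        exact mem_dyadicBlock_log i.2
    _ ≤ ∑ r ∈ t.image logs, G r := sum_le_sum fun r _ => hblock r
    _ ≤ ∑' r, G r := hG.sum_le_tsum _ fun r _ => hG0 r

theorem sum_dyadicBlock_mul_prod_div_le {a : (ι → ℕ) → ℝ} {B B2 : ℕ → ℝ} (ha : ∀ i, 0 ≤ a i)
    (hB2 : ∀ j, 0 ≤ B2 j) (hB : ∀ N n : ℕ, 2 ^ N ≤ n → n < 2 ^ (N + 1) → B n = B2 N)
    (r : ι → ℕ) :
    ∑ x ∈ dyadicBlock r, a x * ∏ k, B (x k) / (x k : ℝ) ≤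
      (∑ x ∈ dyadicBlock r, a x) * ∏ k, B2 (r k) / 2 ^ r k := by
  rw [sum_mul]
  refine sum_le_sum fun x hx => mul_le_mul_of_nonneg_left ?_ (ha x)
  refine prod_le_prod (fun k _ => ?_) fun k _ => ?_ <;>
    obtain ⟨hlo, hhi⟩ := mem_dyadicBlock.1 hx k <;> rw [hB (r k) (x k) hlo hhi]
  · positivity [hB2 (r k)]
  · exact div_le_div_of_nonneg_left (hB2 (r k)) (by positivity) (by exact_mod_cast hlo)

end Dyadic

theorem two_rpow_mul_one_sub_one_div (j : ℕ) (d : ℝ) :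
    (2 : ℝ) ^ ((j : ℝ) * (1 - 1 / d)) = 2 ^ j / 2 ^ ((j : ℝ) / d) := by
  rw [mul_one_sub, mul_one_div, rpow_sub two_pos, rpow_natCast]

theorem stmt4_general (d : ℕ) (a : (Fin d → ℕ) → ℝ) (v : Fin d → ℕ → ℝ)
    (B2 : ℕ → ℝ) (B : ℕ → ℝ) (Cd : ℝ)
    (ha : ∀ i, 0 ≤ a i) (hv : ∀ k r, 0 ≤ v k r)
    (hblock : ∀ r : Fin d → ℕ,
      ∑ i ∈ Fintype.piFinset (fun k => Finset.Ico (2 ^ r k) (2 ^ (r k + 1))), a i ≤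
        Cd * ∏ k : Fin d, (2 : ℝ) ^ ((r k : ℝ) * (1 - 1 / d)) * (v k (r k)) ^ ((1 : ℝ) / d))
    (hB2pos : ∀ j, 0 < B2 j)
    (hB : ∀ N n : ℕ, 2 ^ N ≤ n → n < 2 ^ (N + 1) → B n = B2 N)
    (hsum : ∀ k : Fin d,
      Summable (fun j : ℕ => B2 j * (v k j) ^ ((1 : ℝ) / d) / (2 : ℝ) ^ ((j : ℝ) / d))) :
    Summable (fun i : {i : Fin d → ℕ // ∀ k, 1 ≤ i k} =>
      a i.1 * ∏ k : Fin d, (B (i.1 k) / (i.1 k : ℝ))) := by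
  have hB2 : ∀ j, 0 ≤ B2 j := fun j => (hB2pos j).le
  set g : Fin d → ℕ → ℝ := fun k j => B2 j * v k j ^ ((1 : ℝ) / d) / 2 ^ ((j : ℝ) / d)
  have hg0 : ∀ k j, 0 ≤ g k j := fun k j => by positivity [hB2 j, hv k j]
  refine summable_of_sum_dyadicBlock_le (f := fun x => a x * ∏ k, B (x k) / (x k : ℝ))
    (G := fun r => Cd * ∏ k, g k (r k))
    (fun r x hx => ?_) ((summable_prod_apply_of_nonneg hg0 hsum).mul_left _) fun r => ?_
  · refine mul_nonneg (ha x) (prod_nonneg fun k _ => ?_)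
    obtain ⟨hlo, hhi⟩ := mem_dyadicBlock.1 hx k
    rw [hB _ _ hlo hhi]
    exact div_nonneg (hB2 _) (Nat.cast_nonneg _)
  · calc ∑ x ∈ dyadicBlock r, a x * ∏ k, B (x k) / (x k : ℝ)
        ≤ (∑ x ∈ dyadicBlock r, a x) * ∏ k, B2 (r k) / 2 ^ r k :=
          sum_dyadicBlock_mul_prod_div_le ha hB2 hB r
      _ ≤ (Cd * ∏ k, (2 : ℝ) ^ ((r k : ℝ) * (1 - 1 / d)) * v k (r k) ^ ((1 : ℝ) / d)) *
            ∏ k, B2 (r k) / 2 ^ r k :=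
          mul_le_mul_of_nonneg_right (hblock r) (prod_nonneg fun k _ => by positivity [hB2 (r k)])
      _ = Cd * ∏ k, g k (r k) := by
          rw [mul_assoc, ← prod_mul_distrib]
          congr 1
          refine prod_congr rfl fun k _ => ?_
          rw [two_rpow_mul_one_sub_one_div]
          simp only [g]
          field_simp

theorem stmt4 (d : ℕ) (hd : 2 ≤ d) (a : (Fin d → ℕ) → ℝ) (v : Fin d → ℕ → ℝ)
    (B2 : ℕ → ℝ) (B : ℕ → ℝ) (Cd : ℝ)
    (ha : ∀ i, 0 ≤ a i) (hv : ∀ k r, 0 ≤ v k r)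
    (hblock : ∀ r : Fin d → ℕ,
      ∑ i ∈ Fintype.piFinset (fun k => Finset.Ico (2 ^ r k) (2 ^ (r k + 1))), a i ≤
        Cd * ∏ k : Fin d, (2 : ℝ) ^ ((r k : ℝ) * (1 - 1 / d)) * (v k (r k)) ^ ((1 : ℝ) / d))
    (hB2pos : ∀ j, 0 < B2 j) (hB2mono : Monotone B2)
    (hB : ∀ N n : ℕ, 2 ^ N ≤ n → n < 2 ^ (N + 1) → B n = B2 N)
    (hsum : ∀ k : Fin d,
      Summable (fun j : ℕ => B2 j * (v k j) ^ ((1 : ℝ) / d) / (2 : ℝ) ^ ((j : ℝ) / d))) :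
    Summable (fun i : {i : Fin d → ℕ // ∀ k, 1 ≤ i k} =>
      a i.1 * ∏ k : Fin d, (B (i.1 k) / (i.1 k : ℝ))) :=
  stmt4_general d a v B2 B Cd ha hv hblock hB2pos hB hsum
end
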